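/- arXiv:1307.5724 — 9 statements merged into one kernel-verified Lean document; each statement's English description precedes it below -/
import Mathlib

section
/- Let C be a finite elementary abelian p-group acting on a k-vector space V' = V_1 ⊕ ⋯ ⊕ V_r, acting on each V_i by scalar multiplication via a character χ_i : C → k^*. If the action of C on V' is faithful and no proper subsum of the V_i is a faithful C-module, then χ_1, …, χ_r form an F_p-basis of the dual group Hom(C, k^*). -/
/-!
Discrete logarithms to the base `ζ` identify `Hom(C, kˣ)` with the `𝔽_p`-dual of `C`, turning the
`χ i` into linear functionals `f i`. Faithfulness says that the `f i` have no common zero, so they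
span the dual; minimality provides for each `j` a vector killed by every `f i` with `i ≠ j` but not
by `f j`, which forces linear independence.
-/

open Module Additive

namespace Module.Dual

theorem linearIndependent_of_faithful_of_minimal {K V ι : Type*} [CommRing K] [NoZeroDivisors K]
    [AddCommGroup V] [Module K V] [Fintype ι] (f : ι → Dual K V)
    (hfaith : ∀ v, (∀ i, f i v = 0) → v = 0) (hmin : ∀ j, ∃ v ≠ 0, ∀ i ≠ j, f i v = 0) :
    LinearIndependent K f := by
  classical
  refine Fintype.linearIndependent_iff.2 fun a ha j ↦ by_contra fun haj ↦ ?_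
  obtain ⟨v, hv0, hv⟩ := hmin j
  have hfj : a j * f j v = 0 := by
    have := LinearMap.congr_fun ha v
    rw [LinearMap.sum_apply, Finset.sum_eq_single_of_mem j (Finset.mem_univ j)
      fun i _ hij ↦ by simp [hv i hij]] at this
    simpa using this
  refine hv0 (hfaith v fun i ↦ ?_)
  obtain rfl | hij := eq_or_ne i j
  · exact (mul_eq_zero.1 hfj).resolve_left haj
  · exact hv i hij

theorem exists_eq_sum_smul_of_faithful {K V ι : Type*} [Field K] [AddCommGroup V] [Module K V]
    [Fintype ι] (f : ι → Dual K V) (hfaith : ∀ v, (∀ i, f i v = 0) → v = 0) (φ : Dual K V) :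
    ∃ a : ι → K, φ = ∑ i, a i • f i := by
  classical
  have hinj : Function.Injective (LinearMap.pi f) := fun v w h ↦
    sub_eq_zero.1 <| hfaith _ fun i ↦ by simpa [sub_eq_zero] using congr_fun h i
  obtain ⟨g, rfl⟩ := LinearMap.dualMap_surjective_of_injective hinj φ
  refine ⟨fun i ↦ g (Pi.single i 1), LinearMap.ext fun v ↦ ?_⟩
  rw [LinearMap.dualMap_apply, LinearMap.pi_apply_eq_sum_univ g]
  simp only [LinearMap.pi_apply, LinearMap.sum_apply, LinearMap.smul_apply, smul_eq_mul]
  refine Finset.sum_congr rfl fun i _ ↦ ?_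
  rw [mul_comm]
  congr 2 with j
  simp [Pi.single_apply, eq_comm]

end Module.Dual

namespace IsPrimitiveRoot

variable {R G : Type*} [CommRing R] [IsDomain R] {n : ℕ} [NeZero n] {ζ : Rˣ}
  [CommGroup G] [Module (ZMod n) (Additive G)]

theorem monoidHom_apply_mem_zpowers (hζ : IsPrimitiveRoot ζ n) (ψ : G →* Rˣ) (g : G) :
    ψ g ∈ Subgroup.zpowers ζ := by
  have hg : g ^ n = 1 := by
    simpa using congrArg toMul (ZModModule.char_nsmul_eq_zero n (ofMul g))
  rw [hζ.zpowers_eq, mem_rootsOfUnity, ← map_pow, hg, map_one]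

/-- The discrete logarithm to the base `ζ` of a character of a group of exponent dividing `n`. -/
noncomputable def charLog (hζ : IsPrimitiveRoot ζ n) :
    Additive (G →* Rˣ) →+ Dual (ZMod n) (Additive G) where
  toFun ψ := AddMonoidHom.toZModLinearMap n
    ((hζ.zmodEquivZPowers.symm : Additive (Subgroup.zpowers ζ) →+ ZMod n).comp
      (MonoidHom.toAdditive (ψ.toMul.codRestrict _ (hζ.monoidHom_apply_mem_zpowers ψ.toMul))))
  map_zero' := by ext g; simp
  map_add' ψ φ := by ext g; simp [← map_add]; rfl

theorem charLog_apply_eq_zero_iff (hζ : IsPrimitiveRoot ζ n) (ψ : G →* Rˣ) (g : G) :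
    hζ.charLog (ofMul ψ) (ofMul g) = 0 ↔ ψ g = 1 := by
  simp [charLog, ← ofMul_one]

theorem charLog_injective (hζ : IsPrimitiveRoot ζ n) :
    Function.Injective (hζ.charLog (G := G)) :=
  (injective_iff_map_eq_zero _).2 fun ψ hψ ↦ toMul_eq_one.1 <| MonoidHom.ext fun g ↦
    (hζ.charLog_apply_eq_zero_iff ψ.toMul g).1 (by rw [ofMul_toMul, hψ]; rfl)

theorem charLog_prod_pow {ι : Type*} [Fintype ι] (hζ : IsPrimitiveRoot ζ n) (χ : ι → G →* Rˣ)
    (a : ι → ZMod n) :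
    hζ.charLog (ofMul (∏ i, χ i ^ (a i).val)) = ∑ i, a i • hζ.charLog (ofMul (χ i)) := by
  simp only [ofMul_prod, map_sum]
  refine Finset.sum_congr rfl fun i _ ↦ ?_
  rw [ofMul_pow _ (χ i), map_nsmul, ← Nat.cast_smul_eq_nsmul (ZMod n), ZMod.natCast_zmod_val]

end IsPrimitiveRoot

theorem stmt1_general (p : ℕ) [Fact p.Prime] (k : Type*) [Field k] (ζ : k)
    (hζ : IsPrimitiveRoot ζ p)
    (C : Type*) [CommGroup C] (hC : ∀ c : C, c ^ p = 1)
    (r : ℕ) (χ : Fin r → (C →* kˣ))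
    (hfaith : ∀ c : C, (∀ i, χ i c = 1) → c = 1)
    (hmin : ∀ s : Finset (Fin r), s ≠ Finset.univ →
      ∃ c : C, c ≠ 1 ∧ ∀ i ∈ s, χ i c = 1) :
    (∀ a : Fin r → ZMod p, (∏ i, χ i ^ (a i).val) = 1 → a = 0) ∧
    (∀ ψ : C →* kˣ, ∃ a : Fin r → ZMod p, ψ = ∏ i, χ i ^ (a i).val) := by
  let _ : Module (ZMod p) (Additive C) := AddCommGroup.zmodModule (n := p) fun c ↦ hC c.toMul
  have hu := hζ.isUnit_unit (NeZero.ne p)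
  set F : Fin r → Dual (ZMod p) (Additive C) := fun i ↦ hu.charLog (ofMul (χ i))
  have hfaith' (c : Additive C) (hc : ∀ i, F i c = 0) : c = 0 :=
    hfaith c.toMul fun i ↦ (hu.charLog_apply_eq_zero_iff _ _).1 (hc i)
  have hmin' (j : Fin r) : ∃ c ≠ 0, ∀ i ≠ j, F i c = 0 := by
    obtain ⟨c, hc1, hc⟩ := hmin (Finset.univ.erase j) (Finset.erase_ne_self.2 (Finset.mem_univ j))
    exact ⟨ofMul c, hc1, fun i hij ↦
      (hu.charLog_apply_eq_zero_iff _ _).2 (hc i (Finset.mem_erase.2 ⟨hij, Finset.mem_univ i⟩))⟩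
  refine ⟨fun a ha ↦ funext <| Fintype.linearIndependent_iff.1
      (Dual.linearIndependent_of_faithful_of_minimal F hfaith' hmin') a ?_, fun ψ ↦ ?_⟩
  · rw [← hu.charLog_prod_pow, ha, ofMul_one, map_zero]
  · obtain ⟨a, ha⟩ := Dual.exists_eq_sum_smul_of_faithful F hfaith' (hu.charLog (ofMul ψ))
    refine ⟨a, ofMul.injective <| hu.charLog_injective ?_⟩
    rw [ha, hu.charLog_prod_pow]

/-- The characters through which an elementary abelian `p`-group acts on the summands of a
minimal faithful module form an `F_p`-basis of the dual group `Hom(C, kˣ)`. -/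
theorem stmt1 (p : ℕ) [Fact p.Prime] (k : Type*) [Field k] (ζ : k)
    (hζ : IsPrimitiveRoot ζ p)
    (C : Type*) [CommGroup C] [Finite C] (hC : ∀ c : C, c ^ p = 1)
    (r : ℕ) (χ : Fin r → (C →* kˣ))
    (hfaith : ∀ c : C, (∀ i, χ i c = 1) → c = 1)
    (hmin : ∀ s : Finset (Fin r), s ≠ Finset.univ →
      ∃ c : C, c ≠ 1 ∧ ∀ i ∈ s, χ i c = 1) :
    (∀ a : Fin r → ZMod p, (∏ i, χ i ^ (a i).val) = 1 → a = 0) ∧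
    (∀ ψ : C →* kˣ, ∃ a : Fin r → ZMod p, ψ = ∏ i, χ i ^ (a i).val) :=
  stmt1_general p k ζ hζ C hC r χ hfaith hmin
end

section
/- Let G be a finite group acting linearly and faithfully on a vector space V over a field k of characteristic not dividing |G|, and suppose v ∈ V is nonzero with stabilizer S ⊆ G of the line through v, so that s·v = χ(s)v for a character χ : S → k^*. If χ is trivial, then for every m ≥ |G| there exists a G-invariant homogeneous polynomial f of degree m with f(v) ≠ 0. -/
/-!
For every point `u = g • v ≠ v` of the orbit, triviality of the character means that `v` is not a
multiple of `u`, so some linear form vanishes at `u` but not at `v`. The product of these forms,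
padded with a power of a coordinate not vanishing at `v`, is a form `h` of degree `m` that vanishes
on the orbit except at `v`. The orbit sum `∑ g, h ∘ g` is then invariant, and its value at `v` is
`|Stab v| • h v`, which is nonzero because `|Stab v|` divides `|G|`.
-/

open MvPolynomial Finset

section MulAction

variable {G α M : Type*} [Group G] [Fintype G] [MulAction G α] [AddCommMonoid M]

theorem sum_smul_eq_card_stabilizer_nsmul {f : α → M} {a : α}
    (hf : ∀ g : G, g • a ≠ a → f (g • a) = 0) :
    ∑ g : G, f (g • a) = Nat.card (MulAction.stabilizer G a) • f a := by
  classical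
  calc ∑ g : G, f (g • a) = ∑ g : G, if g • a = a then f a else 0 :=
        sum_congr rfl fun g _ => by split_ifs with hg <;> simp [hg, hf]
    _ = Nat.card (MulAction.stabilizer G a) • f a := by
        rw [sum_ite, sum_const_zero, add_zero, sum_const, Nat.card_eq_fintype_card,
          Fintype.card_subtype]
        rfl

end MulAction

namespace MvPolynomial

variable {k ι : Type*} [Field k] [Fintype ι] [DecidableEq ι]

theorem eval_toMvPolynomial_toMatrix' {κ : Type*} (A : (ι → k) →ₗ[k] κ → k) (i : κ) (w : ι → k) :
    eval w ((LinearMap.toMatrix' A).toMvPolynomial i) = A w i := by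
  rw [Matrix.toMvPolynomial_eval_eq_apply, LinearMap.toMatrix'_mulVec]

noncomputable def compLinearMap (p : MvPolynomial ι k) (A : (ι → k) →ₗ[k] ι → k) :
    MvPolynomial ι k :=
  bind₁ (LinearMap.toMatrix' A).toMvPolynomial p

@[simp]
theorem eval_compLinearMap (p : MvPolynomial ι k) (A : (ι → k) →ₗ[k] ι → k) (w : ι → k) :
    eval w (p.compLinearMap A) = eval (A w) p := by
  have hA : (fun i => eval w ((LinearMap.toMatrix' A).toMvPolynomial i)) = A w := by
    funext i
    exact eval_toMvPolynomial_toMatrix' A i w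
  unfold compLinearMap
  rw [← hA]
  exact eval₂Hom_bind₁ (RingHom.id k) w _ p

theorem IsHomogeneous.compLinearMap {p : MvPolynomial ι k} {n : ℕ} (hp : p.IsHomogeneous n)
    (A : (ι → k) →ₗ[k] ι → k) : (p.compLinearMap A).IsHomogeneous n := by
  unfold MvPolynomial.compLinearMap
  have := hp.aeval _ (Matrix.toMvPolynomial_isHomogeneous (LinearMap.toMatrix' A))
  rwa [one_mul] at this

theorem exists_isHomogeneous_one_eval_eq_zero_eval_ne_zero {u v : ι → k}
    (hv : v ∉ Submodule.span k {u}) :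
    ∃ q : MvPolynomial ι k, q.IsHomogeneous 1 ∧ eval u q = 0 ∧ eval v q ≠ 0 := by
  obtain ⟨φ, hφv, hφu⟩ := Submodule.exists_dual_map_eq_bot_of_notMem hv inferInstance
  have hφ (w : ι → k) :
      eval w ((LinearMap.toMatrix' (LinearMap.pi fun _ : Unit => φ)).toMvPolynomial ()) = φ w :=
    eval_toMvPolynomial_toMatrix' _ () w
  refine ⟨_, Matrix.toMvPolynomial_isHomogeneous _ (), ?_, by rwa [hφ]⟩
  rw [hφ, ← Submodule.mem_bot k, ← hφu]
  exact Submodule.mem_map_of_mem (Submodule.mem_span_singleton_self u)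

theorem exists_isHomogeneous_eval_eq_zero_eval_ne_zero {v : ι → k} (hv : v ≠ 0)
    {T : Finset (ι → k)} (hT : ∀ u ∈ T, v ∉ Submodule.span k {u}) {n : ℕ} (hn : #T ≤ n) :
    ∃ f : MvPolynomial ι k, f.IsHomogeneous n ∧ (∀ u ∈ T, eval u f = 0) ∧ eval v f ≠ 0 := by
  choose! q hq_hom hq_u hq_v using
    fun u hu => exists_isHomogeneous_one_eval_eq_zero_eval_ne_zero (hT u hu)
  obtain ⟨i, hi⟩ := Function.ne_iff.mp hv
  refine ⟨(∏ u ∈ T, q u) * X i ^ (n - #T), ?_, fun u hu => ?_, ?_⟩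
  · have := (IsHomogeneous.prod T q (fun _ => 1) hq_hom).mul (isHomogeneous_X_pow i (n - #T))
    rwa [sum_const, smul_eq_mul, mul_one, Nat.add_sub_cancel' hn] at this
  · rw [map_mul, map_prod, prod_eq_zero hu (hq_u u hu), zero_mul]
  · rw [map_mul, map_prod, map_pow, eval_X]
    exact mul_ne_zero (prod_ne_zero_iff.mpr hq_v) (pow_ne_zero _ hi)

section GroupSum

variable (G : Subgroup (Module.End k (ι → k))ˣ) [Fintype G]

noncomputable def groupSum (p : MvPolynomial ι k) : MvPolynomial ι k :=
  ∑ g : G, p.compLinearMap ((g : (Module.End k (ι → k))ˣ) : Module.End k (ι → k))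

theorem eval_groupSum (p : MvPolynomial ι k) (w : ι → k) :
    eval w (groupSum G p) = ∑ g : G, eval (g • w) p := by
  simp only [groupSum, map_sum, eval_compLinearMap]
  rfl

theorem eval_smul_groupSum (g : G) (p : MvPolynomial ι k) (w : ι → k) :
    eval (g • w) (groupSum G p) = eval w (groupSum G p) := by
  simp only [eval_groupSum, smul_smul]
  exact Fintype.sum_equiv (Equiv.mulRight g) _ _ fun _ => rfl

theorem IsHomogeneous.groupSum {p : MvPolynomial ι k} {n : ℕ} (hp : p.IsHomogeneous n) :
    (groupSum G p).IsHomogeneous n :=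
  IsHomogeneous.sum _ _ _ fun _ _ => hp.compLinearMap _

end GroupSum

end MvPolynomial

/-- If the character of the stabilizer of the line through `v ≠ 0` is trivial, then for every
`m ≥ |G|` some `G`-invariant homogeneous polynomial of degree `m` does not vanish at `v`. -/
theorem stmt3 (k : Type*) [Field k] (ι : Type*) [Fintype ι]
    (G : Subgroup (Module.End k (ι → k))ˣ) [Finite G]
    (hchar : (Nat.card G : k) ≠ 0)
    (v : ι → k) (hv : v ≠ 0)
    (hχ : ∀ s ∈ G, (∃ c : k, (s : Module.End k (ι → k)) v = c • v) →
      (s : Module.End k (ι → k)) v = v) :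
    ∀ m : ℕ, Nat.card G ≤ m →
      ∃ f : MvPolynomial ι k, f.IsHomogeneous m ∧
        (∀ g ∈ G, ∀ w : ι → k,
          MvPolynomial.eval ((g : Module.End k (ι → k)) w) f = MvPolynomial.eval w f) ∧
        MvPolynomial.eval v f ≠ 0 := by
  classical
  intro m hm
  have := Fintype.ofFinite G
  set T := {u ∈ univ.image fun g : G => g • v | u ≠ v}
  have hT : ∀ u ∈ T, v ∉ Submodule.span k {u} := by
    simp only [T, mem_filter, mem_image, mem_univ, true_and]
    rintro _ ⟨⟨g, rfl⟩, hgv⟩ hv_mem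
    obtain ⟨c, hc⟩ := Submodule.mem_span_singleton.mp hv_mem
    have hc0 : c ≠ 0 := by
      rintro rfl
      exact hv (by simpa using hc.symm)
    exact hgv (hχ g g.2 ⟨c⁻¹, (eq_inv_smul_iff₀ hc0).mpr hc⟩)
  have hTm : #T ≤ m := calc
    #T ≤ #(univ : Finset G) := (card_filter_le _ _).trans card_image_le
    _ ≤ m := by rwa [card_univ, ← Nat.card_eq_fintype_card]
  obtain ⟨h, h_hom, hT0, hv0⟩ := exists_isHomogeneous_eval_eq_zero_eval_ne_zero hv hT hTm
  refine ⟨groupSum G h, h_hom.groupSum G, fun g hg w => eval_smul_groupSum G ⟨g, hg⟩ h w, ?_⟩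
  have hstab : (Nat.card (MulAction.stabilizer G v) : k) ≠ 0 :=
    ne_zero_of_dvd_ne_zero hchar (Nat.cast_dvd_cast (Subgroup.card_subgroup_dvd_card _))
  have hsum := sum_smul_eq_card_stabilizer_nsmul (G := G) (f := fun x => eval x h) (a := v)
    fun g hg => hT0 _ (by simp [T, hg])
  rw [eval_groupSum, hsum, nsmul_eq_mul]
  exact mul_ne_zero hstab hv0
end

section
/- Let d_1, …, d_s be positive integers with gcd(d_1, …, d_s) = 1. Then there exists q_0 such that for every integer q ≥ q_0, the set Λ^q = {(a_1,…,a_s) ∈ Z_{≥0}^s : a_1 d_1 + ⋯ + a_s d_s = q} spans Q^s as a Q-vector space. -/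
/-!
Every large `q` is a value of `∑ aᵢ dᵢ` on `ℕ^s` (numerical semigroups,
`Nat.exists_mem_closure_of_ge`), and so is `q - d_{i₀} d_j`, say at `c`. Then `c + d_j e_{i₀}` and
`c + d_{i₀} e_j` both lie in `Λ^q`, so their differences `d_j e_{i₀} - d_{i₀} e_j` span the
hyperplane `d^⊥` over `ℚ`; any point of `Λ^q` lies off that hyperplane since `q ≠ 0`.
-/

open Filter

theorem Nat.setGcd_range_dvd_finset_gcd {ι : Type*} [Fintype ι] (d : ι → ℕ) :
    Nat.setGcd (Set.range d) ∣ Finset.univ.gcd d :=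
  Finset.dvd_gcd fun i _ ↦ Nat.setGcd_dvd_of_mem (Set.mem_range_self i)

theorem Nat.eventually_exists_sum_mul_eq {ι : Type*} [Fintype ι] {d : ι → ℕ}
    (hd : Finset.univ.gcd d = 1) : ∀ᶠ m in atTop, ∃ a : ι → ℕ, ∑ i, a i * d i = m := by
  obtain ⟨n, hn⟩ := Nat.exists_mem_closure_of_ge (Set.range d)
  have hdvd (m : ℕ) : Nat.setGcd (Set.range d) ∣ m :=
    (hd ▸ Nat.setGcd_range_dvd_finset_gcd d).trans (one_dvd m)
  filter_upwards [eventually_ge_atTop n] with m hm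
  obtain ⟨a, ha⟩ := AddSubmonoid.mem_closure_range_iff_of_fintype.1 (hn m hm (hdvd m))
  exact ⟨a, by simpa [smul_eq_mul] using ha.symm⟩

theorem Nat.eventually_exists_sum_mul_add_eq {ι : Type*} [Fintype ι] {d : ι → ℕ}
    (hd : Finset.univ.gcd d = 1) (k : ℕ) :
    ∀ᶠ m in atTop, ∃ a : ι → ℕ, ∑ i, a i * d i + k = m := by
  filter_upwards [(tendsto_sub_atTop_nat k).eventually (Nat.eventually_exists_sum_mul_eq hd),
    eventually_ge_atTop k] with m ⟨a, ha⟩ hkm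
  exact ⟨a, by omega⟩

theorem Submodule.eq_top_of_single_sub_single_mem {K ι : Type*} [Field K] [Fintype ι]
    [DecidableEq ι] {W : Submodule K (ι → K)} {d a : ι → K} {i₀ : ι} (hd : d i₀ ≠ 0)
    (ha : a ∈ W) (had : ∑ i, a i * d i ≠ 0)
    (hw : ∀ j, Pi.single i₀ (d j) - Pi.single j (d i₀) ∈ W) : W = ⊤ := by
  set q := ∑ i, a i * d i
  have hcomb :
      Pi.single i₀ q = d i₀ • a + ∑ j, a j • (Pi.single i₀ (d j) - Pi.single j (d i₀)) := by
    ext i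
    rcases eq_or_ne i i₀ with rfl | hi
    · simp [mul_sub, Finset.sum_sub_distrib, Pi.single_apply, q, mul_comm]
    · simp [Pi.single_apply, hi, mul_comm]
  have hsingle₀ (y : K) : Pi.single i₀ y ∈ W := by
    have hq : Pi.single i₀ q ∈ W := hcomb ▸ add_mem (smul_mem _ _ ha)
      (sum_mem fun j _ ↦ smul_mem _ _ (hw j))
    simpa [← Pi.single_smul', had] using smul_mem W (y / q) hq
  have hsingle (j : ι) (y : K) : Pi.single j y ∈ W := by
    have hj : Pi.single j (d i₀) ∈ W := by
      simpa using sub_mem (hsingle₀ (d j)) (hw j)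
    simpa [← Pi.single_smul', hd] using smul_mem W (y / d i₀) hj
  refine eq_top_iff'.2 fun x ↦ ?_
  rw [← Finset.univ_sum_single x]
  exact sum_mem fun j _ ↦ hsingle j (x j)

theorem sum_add_single_mul {ι R : Type*} [Fintype ι] [DecidableEq ι] [Semiring R] (a d : ι → R)
    (i₀ : ι) (x : R) : ∑ i, (a + Pi.single i₀ x : ι → R) i * d i = ∑ i, a i * d i + x * d i₀ := by
  simp [add_mul, Finset.sum_add_distrib, Pi.single_apply]

theorem stmt5_general (s : ℕ) (d : Fin s → ℕ)
    (hgcd : Finset.univ.gcd d = 1) :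
    ∃ q₀ : ℕ, ∀ q : ℕ, q₀ ≤ q →
      Submodule.span ℚ {x : Fin s → ℚ | ∃ a : Fin s → ℕ,
        (∀ i, x i = (a i : ℚ)) ∧ ∑ i, a i * d i = q} = ⊤ := by
  obtain ⟨i₀, hi₀⟩ : ∃ i, d i ≠ 0 := by
    by_contra! h
    simp [Finset.gcd_eq_zero_iff.2 fun i _ ↦ h i] at hgcd
  rw [← eventually_atTop]
  filter_upwards [eventually_gt_atTop 0, Nat.eventually_exists_sum_mul_eq hgcd,
    eventually_all.2 fun j ↦ Nat.eventually_exists_sum_mul_add_eq hgcd (d i₀ * d j)]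
    with q hq ⟨a, ha⟩ hc
  set Λ := {x : Fin s → ℚ | ∃ a : Fin s → ℕ, (∀ i, x i = (a i : ℚ)) ∧ ∑ i, a i * d i = q}
  have hmem (b : Fin s → ℕ) (hb : ∑ i, b i * d i = q) : (fun i ↦ (b i : ℚ)) ∈ Λ :=
    ⟨b, fun _ ↦ rfl, hb⟩
  refine Submodule.eq_top_of_single_sub_single_mem (d := fun i ↦ (d i : ℚ)) (i₀ := i₀)
    (by exact_mod_cast hi₀) (Submodule.subset_span (hmem a ha)) (by exact_mod_cast ha ▸ hq.ne')
    fun j ↦ ?_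
  obtain ⟨c, hc⟩ := hc j
  have h₁ := hmem (c + Pi.single i₀ (d j)) (by rw [sum_add_single_mul, ← hc, mul_comm])
  have h₂ := hmem (c + Pi.single j (d i₀)) (by rw [sum_add_single_mul, ← hc])
  convert Submodule.sub_mem _ (Submodule.subset_span h₁) (Submodule.subset_span h₂) using 1
  ext i
  simp [Pi.single_apply]

/-- Claim 3: for coprime positive integers `d₁, …, d_s`, for all sufficiently large `q` the set
of nonnegative integer solutions of `a₁d₁ + ⋯ + a_s d_s = q` spans `ℚ^s`. -/
theorem stmt5 (s : ℕ) (d : Fin s → ℕ) (hd : ∀ i, 0 < d i)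
    (hgcd : Finset.univ.gcd d = 1) :
    ∃ q₀ : ℕ, ∀ q : ℕ, q₀ ≤ q →
      Submodule.span ℚ {x : Fin s → ℚ | ∃ a : Fin s → ℕ,
        (∀ i, x i = (a i : ℚ)) ∧ ∑ i, a i * d i = q} = ⊤ :=
  stmt5_general s d hgcd
end

section
/- Let G be a finite group with subgroups G_0 and G_1 acting linearly on V = V_0 ⊕ V_1, where G_0 fixes V_1 pointwise, G_1 fixes V_0 pointwise, V_0 is the unique G_0-invariant complement of V_1 = V^{G_0}, and V_1 is the unique G_1-invariant complement of V_0 = V^{G_1}. Then G_0 and G_1 commute elementwise, G_0 ∩ G_1 = {1}, and together they generate a subgroup isomorphic to G_0 × G_1. -/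
/-!
Write `V = V₀ ⊕ V₁`. An element of `G₀` acts on `V₀` and is the identity on `V₁`, an element of
`G₁` acts on `V₁` and is the identity on `V₀`; so both products `gh` and `hg` act as `g` on `V₀`
and as `h` on `V₁`, and an element of `G₀ ∩ G₁` is the identity on all of `V`. Two commuting
subgroups with trivial intersection generate their internal direct product.
-/

namespace LinearMap

variable {R M N : Type*} [Semiring R] [AddCommMonoid M] [AddCommMonoid N] [Module R M]
  [Module R N]

theorem ext_of_sup_eq_top {p q : Submodule R M} (hpq : p ⊔ q = ⊤) {f g : M →ₗ[R] N}
    (hp : ∀ x ∈ p, f x = g x) (hq : ∀ x ∈ q, f x = g x) : f = g :=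
  eqLocus_eq_top.1 <| top_le_iff.1 <| hpq ▸ sup_le (le_eqLocus.2 hp) (le_eqLocus.2 hq)

end LinearMap

namespace Module.End

variable {R M : Type*} [Semiring R] [AddCommMonoid M] [Module R M] {p q : Submodule R M}

theorem commute_of_fixes_of_mapsTo (hpq : p ⊔ q = ⊤) {f g : Module.End R M}
    (hf : ∀ x ∈ q, f x = x) (hg : ∀ x ∈ p, g x = x)
    (hfp : ∀ x ∈ p, f x ∈ p) (hgq : ∀ x ∈ q, g x ∈ q) : Commute f g :=
  LinearMap.ext_of_sup_eq_top hpq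
    (fun x hx => by simp only [mul_apply, hg x hx, hg _ (hfp x hx)])
    (fun x hx => by simp only [mul_apply, hf x hx, hf _ (hgq x hx)])

end Module.End

namespace Subgroup

variable {G : Type*} [Group G] {H K : Subgroup G}

noncomputable def prodMulEquivSupOfCommute (hcomm : ∀ h ∈ H, ∀ k ∈ K, Commute h k)
    (hdisj : Disjoint H K) : H × K ≃* (H ⊔ K : Subgroup G) :=
  let φ := H.subtype.noncommCoprod K.subtype fun h k => hcomm h h.2 k k.2
  have hφ : Function.Injective φ := (MonoidHom.noncommCoprod_injective _ _ _).2
    ⟨H.subtype_injective, K.subtype_injective, by simpa only [range_subtype] using hdisj⟩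
  (MonoidHom.ofInjective hφ).trans <| MulEquiv.subgroupCongr <|
    (MonoidHom.noncommCoprod_range _ _ _).trans <| by rw [range_subtype, range_subtype]

end Subgroup

theorem stmt7_general (k V : Type*) [Field k] [AddCommGroup V] [Module k V]
    (G₀ G₁ : Subgroup (Module.End k V)ˣ)
    (V₀ V₁ : Submodule k V) (hc : IsCompl V₀ V₁)
    (h₀fix : ∀ g ∈ G₀, ∀ v ∈ V₁, (g : Module.End k V) v = v)
    (h₁fix : ∀ g ∈ G₁, ∀ v ∈ V₀, (g : Module.End k V) v = v)
    (h₀inv : ∀ g ∈ G₀, ∀ v ∈ V₀, (g : Module.End k V) v ∈ V₀)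
    (h₁inv : ∀ g ∈ G₁, ∀ v ∈ V₁, (g : Module.End k V) v ∈ V₁) :
    (∀ g ∈ G₀, ∀ h ∈ G₁, g * h = h * g) ∧ G₀ ⊓ G₁ = ⊥ ∧
      Nonempty ((G₀ ⊔ G₁ : Subgroup (Module.End k V)ˣ) ≃* G₀ × G₁) := by
  have hcomm : ∀ g ∈ G₀, ∀ h ∈ G₁, Commute g h := fun g hg h hh =>
    Commute.units_val_iff.1 <| Module.End.commute_of_fixes_of_mapsTo hc.sup_eq_top
      (h₀fix g hg) (h₁fix h hh) (h₀inv g hg) (h₁inv h hh)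
  have hdisj : G₀ ⊓ G₁ = ⊥ := (Subgroup.eq_bot_iff_forall _).2 fun g ⟨hg₀, hg₁⟩ =>
    Units.ext <| LinearMap.ext_of_sup_eq_top hc.sup_eq_top (h₁fix g hg₁) (h₀fix g hg₀)
  exact ⟨hcomm, hdisj,
    ⟨(Subgroup.prodMulEquivSupOfCommute hcomm (disjoint_iff.2 hdisj)).symm⟩⟩

/-- Proposition 3.1(d), intermediate step: `G₀` and `G₁` commute elementwise, intersect
trivially, and generate a subgroup isomorphic to `G₀ × G₁`. -/
theorem stmt7 (k V : Type*) [Field k] [AddCommGroup V] [Module k V]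
    (G : Subgroup (Module.End k V)ˣ) [Finite G]
    (G₀ G₁ : Subgroup (Module.End k V)ˣ) (h₀G : G₀ ≤ G) (h₁G : G₁ ≤ G)
    (V₀ V₁ : Submodule k V) (hc : IsCompl V₀ V₁)
    (h₀fix : ∀ g ∈ G₀, ∀ v ∈ V₁, (g : Module.End k V) v = v)
    (h₁fix : ∀ g ∈ G₁, ∀ v ∈ V₀, (g : Module.End k V) v = v)
    (h₀inv : ∀ g ∈ G₀, ∀ v ∈ V₀, (g : Module.End k V) v ∈ V₀)
    (h₁inv : ∀ g ∈ G₁, ∀ v ∈ V₁, (g : Module.End k V) v ∈ V₁)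
    (h₀fixed : ∀ v : V, (∀ g ∈ G₀, (g : Module.End k V) v = v) ↔ v ∈ V₁)
    (h₁fixed : ∀ v : V, (∀ g ∈ G₁, (g : Module.End k V) v = v) ↔ v ∈ V₀)
    (h₀uniq : ∀ W : Submodule k V, IsCompl W V₁ →
      (∀ g ∈ G₀, ∀ w ∈ W, (g : Module.End k V) w ∈ W) → W = V₀)
    (h₁uniq : ∀ W : Submodule k V, IsCompl W V₀ →
      (∀ g ∈ G₁, ∀ w ∈ W, (g : Module.End k V) w ∈ W) → W = V₁) :
    (∀ g ∈ G₀, ∀ h ∈ G₁, g * h = h * g) ∧ G₀ ⊓ G₁ = ⊥ ∧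
      Nonempty ((G₀ ⊔ G₁ : Subgroup (Module.End k V)ˣ) ≃* G₀ × G₁) :=
  stmt7_general k V G₀ G₁ V₀ V₁ hc h₀fix h₁fix h₀inv h₁inv
end

section
/- Let G ⊆ GL(V) be a finite group generated by pseudo-reflections, none of which has order divisible by a prime p. Then every Sylow p-subgroup of G is contained in the commutator subgroup [G, G]. -/
/-!
The abelianization of `G` is generated by the images of the pseudo-reflections, whose orders
are prime to `p`. In a commutative group the elements of order prime to `p` form a subgroup, so
every element of the abelianization has order prime to `p`. The image of a Sylow `p`-subgroup is
a `p`-group, hence trivial, i.e. the Sylow subgroup lies in the kernel `[G, G]`.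
-/

/-- `g` is a pseudo-reflection: it acts as the identity on a hyperplane `H` and as
multiplication by a root of unity `ζ ≠ 1` on a complementary line. -/
def IsPseudoReflection (k V : Type*) [Field k] [AddCommGroup V] [Module k V]
    (g : (Module.End k V)ˣ) : Prop :=
  ∃ ζ : k, ζ ≠ 1 ∧ (∃ n : ℕ, 0 < n ∧ ζ ^ n = 1) ∧
    ∃ H L : Submodule k V, IsCompl H L ∧ Module.finrank k L = 1 ∧
      (∀ v ∈ H, (g : Module.End k V) v = v) ∧
      (∀ v ∈ L, (g : Module.End k V) v = ζ • v)

namespace CommGroup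

variable (A : Type*) [CommGroup A] (p : ℕ) [Fact p.Prime]

/-- Elements of infinite order are excluded, since their `orderOf` is `0` and `p ∣ 0`. -/
def primeToPart : Subgroup A where
  carrier := {a | ¬ p ∣ orderOf a}
  one_mem' := by simpa using (Fact.out : p.Prime).ne_one
  mul_mem' {a b} ha hb hab := by
    have hdvd : orderOf (a * b) ∣ orderOf a * orderOf b :=
      (Commute.all a b).orderOf_mul_dvd_lcm.trans (Nat.lcm_dvd_mul _ _)
    rcases (Fact.out : p.Prime).dvd_mul.mp (hab.trans hdvd) with h | h
    exacts [ha h, hb h]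
  inv_mem' {a} ha := by simpa using ha

end CommGroup

section

variable {G : Type*} [Group G] {p : ℕ} [Fact p.Prime] {S : Set G}

lemma Abelianization.of_mem_primeToPart (hS : Subgroup.closure S = ⊤)
    (hSp : ∀ s ∈ S, ¬ p ∣ orderOf s) (g : G) :
    of g ∈ CommGroup.primeToPart (Abelianization G) p := by
  have hle : Subgroup.closure S ≤ (CommGroup.primeToPart (Abelianization G) p).comap of :=
    Subgroup.closure_le _ |>.2 fun s hs hdvd => hSp s hs (hdvd.trans (orderOf_map_dvd _ _))
  exact hle (hS ▸ Subgroup.mem_top g)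

theorem IsPGroup.le_commutator_of_closure_eq_top (hS : Subgroup.closure S = ⊤)
    (hSp : ∀ s ∈ S, ¬ p ∣ orderOf s) {P : Subgroup G} (hP : IsPGroup p P) :
    P ≤ commutator G := by
  intro x hx
  rw [← Abelianization.ker_of, MonoidHom.mem_ker]
  by_contra hne
  have hdvd := (hP.map Abelianization.of).dvd_orderOf
    (g := ⟨Abelianization.of x, Subgroup.mem_map_of_mem _ hx⟩) (by simpa using hne)
  rw [Subgroup.orderOf_mk] at hdvd
  exact Abelianization.of_mem_primeToPart hS hSp x hdvd

end

theorem stmt10_general (k V : Type*) [Field k] [AddCommGroup V] [Module k V]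
    (G : Subgroup (Module.End k V)ˣ) (p : ℕ) [Fact p.Prime]
    (hgen : Subgroup.closure
      {g : (Module.End k V)ˣ | g ∈ G ∧ IsPseudoReflection k V g} = G)
    (hord : ∀ g ∈ G, IsPseudoReflection k V g → ¬ p ∣ orderOf g) :
    ∀ P : Sylow p G, (P : Subgroup G) ≤ commutator G := by
  intro P
  generalize hS : {g : (Module.End k V)ˣ | g ∈ G ∧ IsPseudoReflection k V g} = S at hgen
  subst hgen
  refine P.isPGroup'.le_commutator_of_closure_eq_top Subgroup.closure_closure_coe_preimage ?_
  intro g (hg : (g : (Module.End k V)ˣ) ∈ S)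
  rw [← Subgroup.orderOf_coe]
  exact hord g g.2 (hS.ge hg).2

/-- Proposition 3.1(g): if `G` is generated by pseudo-reflections of order not divisible by
`p`, then every Sylow `p`-subgroup of `G` lies in the commutator subgroup `[G,G]`. -/
theorem stmt10 (k V : Type*) [Field k] [AddCommGroup V] [Module k V]
    [FiniteDimensional k V]
    (G : Subgroup (Module.End k V)ˣ) [Finite G] (p : ℕ) [Fact p.Prime]
    (hchar : (Nat.card G : k) ≠ 0)
    (hgen : Subgroup.closure
      {g : (Module.End k V)ˣ | g ∈ G ∧ IsPseudoReflection k V g} = G)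
    (hord : ∀ g ∈ G, IsPseudoReflection k V g → ¬ p ∣ orderOf g) :
    ∀ P : Sylow p G, (P : Subgroup G) ≤ commutator G :=
  stmt10_general k V G p hgen hord
end

section
/- Let G be a finite group, g a central element of G, and φ' : G → GL(V') an irreducible representation over an algebraically closed field with φ'(g) ≠ 1 and g of order p. If g lies in the commutator subgroup [G,G], then dim(V') is divisible by p. -/
/-!
By Schur's lemma the central element `g` acts on the irreducible representation `V` as a scalar
`μ`. Since `g ^ p = 1` and `ρ g ≠ 1`, `μ` is a primitive `p`-th root of unity. Since `g` is a
product of commutators, `det (ρ g) = μ ^ dim V` equals `1`, so the order `p` of `μ` divides `dim V`.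
-/

namespace Representation

variable {k G V : Type*} [Field k] [Group G] [AddCommGroup V] [Module k V]
  (ρ : Representation k G V)

theorem mapsTo_eigenspace_of_mem_center {g : G} (hg : g ∈ Subgroup.center G) (μ : k) (h : G) :
    ∀ w ∈ Module.End.eigenspace (ρ g) μ, ρ h w ∈ Module.End.eigenspace (ρ g) μ :=
  Module.End.mapsTo_genEigenspace_of_comm
    (by rw [Commute, SemiconjBy, ← map_mul, ← map_mul, Subgroup.mem_center_iff.mp hg h]) μ 1

theorem exists_eq_algebraMap_of_mem_center [IsAlgClosed k] [FiniteDimensional k V] [Nontrivial V]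
    (hirr : ∀ W : Submodule k V, (∀ g : G, ∀ w ∈ W, ρ g w ∈ W) → W = ⊥ ∨ W = ⊤)
    {g : G} (hg : g ∈ Subgroup.center G) :
    ∃ μ : k, ρ g = algebraMap k (Module.End k V) μ := by
  obtain ⟨μ, hμ⟩ := Module.End.exists_eigenvalue (ρ g)
  have htop : Module.End.eigenspace (ρ g) μ = ⊤ :=
    (hirr _ (ρ.mapsTo_eigenspace_of_mem_center hg μ)).resolve_left hμ
  refine ⟨μ, LinearMap.ext fun v => ?_⟩
  exact Module.End.mem_eigenspace_iff.mp (htop ▸ Submodule.mem_top)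

theorem det_eq_one_of_mem_commutator {g : G} (hg : g ∈ commutator G) :
    LinearMap.det (ρ g) = 1 :=
  congrArg Units.val <| Abelianization.commutator_subset_ker
    ((Units.map (LinearMap.det : Module.End k V →* k)).comp ρ.asGroupHom) hg

end Representation

theorem LinearMap.det_algebraMap {K V : Type*} [Field K] [AddCommGroup V] [Module K V] (c : K) :
    LinearMap.det (algebraMap K (Module.End K V) c) = c ^ Module.finrank K V := by
  rw [Algebra.algebraMap_eq_smul_one, LinearMap.det_smul, Module.End.one_eq_id, LinearMap.det_id,
    mul_one]

theorem stmt12_general (k : Type*) [Field k] [IsAlgClosed k]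
    (G : Type*) [Group G]
    (p : ℕ) [Fact p.Prime]
    (V : Type*) [AddCommGroup V] [Module k V] [FiniteDimensional k V]
    (ρ : Representation k G V)
    (hVnt : Nontrivial V)
    (hirr : ∀ W : Submodule k V, (∀ g : G, ∀ w ∈ W, ρ g w ∈ W) → W = ⊥ ∨ W = ⊤)
    (g : G) (hg : g ∈ Subgroup.center G) (hgp : orderOf g = p)
    (hgρ : ρ g ≠ 1) (hgcomm : g ∈ commutator G) :
    p ∣ Module.finrank k V := by
  obtain ⟨μ, hμ⟩ := ρ.exists_eq_algebraMap_of_mem_center hirr hg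
  have hμp : μ ^ p = 1 := (algebraMap k (Module.End k V)).injective <| by
    rw [map_pow, map_one, ← hμ, ← map_pow, ← hgp, pow_orderOf_eq_one, map_one]
  have hμ1 : μ ≠ 1 := by
    rintro rfl
    exact hgρ (hμ.trans (map_one _))
  have hdet : μ ^ Module.finrank k V = 1 := by
    rw [← LinearMap.det_algebraMap, ← hμ, ρ.det_eq_one_of_mem_commutator hgcomm]
  exact orderOf_eq_prime hμp hμ1 ▸ orderOf_dvd_of_pow_eq_one hdet

/-- Proposition 3.1(h): if a central element `g` of order `p` lying in `[G,G]` acts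
nontrivially on an irreducible representation `V'`, then `p` divides `dim V'`. -/
theorem stmt12 (k : Type*) [Field k] [IsAlgClosed k]
    (G : Type*) [Group G] [Finite G] (hchar : (Nat.card G : k) ≠ 0)
    (p : ℕ) [Fact p.Prime]
    (V : Type*) [AddCommGroup V] [Module k V] [FiniteDimensional k V]
    (ρ : Representation k G V)
    (hVnt : Nontrivial V)
    (hirr : ∀ W : Submodule k V, (∀ g : G, ∀ w ∈ W, ρ g w ∈ W) → W = ⊥ ∨ W = ⊤)
    (g : G) (hg : g ∈ Subgroup.center G) (hgp : orderOf g = p)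
    (hgρ : ρ g ≠ 1) (hgcomm : g ∈ commutator G) :
    p ∣ Module.finrank k V :=
  stmt12_general k G p V ρ hVnt hirr g hg hgp hgρ hgcomm
end

section
/- The group G(m, l, n), defined as the subgroup of GL_n(k) generated by the diagonal group A(m,l,n) = {diag(ζ_m^{a_1},…,ζ_m^{a_n}) : a_1 + ⋯ + a_n ≡ 0 mod l} and the permutation matrices of S_n (where l divides m and k contains a primitive m-th root of unity ζ_m), contains the scalar matrix ζ_p·I for a prime p if and only if p divides m and n·(m/p) ≡ 0 mod l. -/
/-!
Every element of `G(m,l,n)` has the form `P_σ · diag(ζ^{a_1}, …, ζ^{a_n})` with `l ∣ ∑ aᵢ`: such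
matrices are closed under multiplication, and the generating set is closed under inverses. If a
scalar `ζ^e · I` has this form then `aᵢ ≡ e [MOD m]` for all `i`, so `l ∣ n e`; conversely
`diag(ζ^e, …, ζ^e)` is a generator when `l ∣ n e`. Finally `ζ_p` is a power of `ζ`, which forces
`p ∣ m`, and `ζ_p` and `ζ^{m/p}` are powers of each other, so `ζ_p · I ∈ G(m,l,n)` iff
`ζ^{m/p} · I ∈ G(m,l,n)`, i.e. iff `l ∣ n (m/p)`.
-/

open Matrix Equiv

theorem Matrix.diagonal_mul_permMatrix {ι R : Type*} [Fintype ι] [DecidableEq ι] [Semiring R]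
    (d : ι → R) (σ : Perm ι) :
    diagonal d * σ.permMatrix R = σ.permMatrix R * diagonal (d ∘ σ.symm) := by
  ext i j
  simp only [Perm.permMatrix, PEquiv.toMatrix_apply, diagonal_mul, mul_diagonal,
    toPEquiv_apply, Option.mem_some_iff, mul_ite, ite_mul, mul_one, one_mul, mul_zero, zero_mul,
    Function.comp_apply]
  split_ifs with h
  · rw [← h, symm_apply_apply]
  · rfl

section

variable {ι R : Type*} [Fintype ι] [DecidableEq ι] [CommRing R]

def IsMonomialPow (ζ : R) (l : ℕ) (M : Matrix ι ι R) : Prop :=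
  ∃ σ : Perm ι, ∃ a : ι → ℕ, M = σ.permMatrix R * diagonal (fun i => ζ ^ a i) ∧ l ∣ ∑ i, a i

namespace IsMonomialPow

variable {ζ : R} {l : ℕ} {M N : Matrix ι ι R}

theorem one : IsMonomialPow ζ l (1 : Matrix ι ι R) :=
  ⟨1, 0, by simp, by simp⟩

theorem mul (hM : IsMonomialPow ζ l M) (hN : IsMonomialPow ζ l N) :
    IsMonomialPow ζ l (M * N) := by
  obtain ⟨σ, a, rfl, ha⟩ := hM
  obtain ⟨τ, b, rfl, hb⟩ := hN
  refine ⟨τ * σ, fun i => a (τ.symm i) + b i, ?_, ?_⟩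
  · rw [Matrix.mul_assoc, ← Matrix.mul_assoc (diagonal _), diagonal_mul_permMatrix,
      Matrix.mul_assoc, diagonal_mul_diagonal, ← Matrix.mul_assoc, permMatrix_mul]
    simp only [Function.comp_apply, pow_add]
  · rw [Finset.sum_add_distrib, Equiv.sum_comp τ.symm a]
    exact dvd_add ha hb

theorem exists_pow_eq_of_eq_smul_one {c : R} (hM : IsMonomialPow ζ l M) (hMc : M = c • 1)
    (hc : c ≠ 0) : ∃ a : ι → ℕ, l ∣ ∑ i, a i ∧ ∀ i, ζ ^ a i = c := by
  obtain ⟨σ, a, rfl, ha⟩ := hM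
  refine ⟨a, ha, fun i => ?_⟩
  have hii := congr_fun (congr_fun hMc i) i
  simp only [Perm.permMatrix, PEquiv.toMatrix_apply, mul_diagonal, toPEquiv_apply,
    Option.mem_some_iff, Matrix.smul_apply, one_apply_eq, smul_eq_mul, mul_one, ite_mul, one_mul,
    zero_mul] at hii
  split_ifs at hii
  · exact hii
  · exact absurd hii.symm hc

end IsMonomialPow

def imprimitiveGenerators (ζ : R) (l : ℕ) : Set (GL ι R) :=
  {M | ∃ a : ι → ℕ, (M : Matrix ι ι R) = diagonal (fun i => ζ ^ a i) ∧ l ∣ ∑ i, a i} ∪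
    {M | ∃ σ : Perm ι, (M : Matrix ι ι R) = σ.permMatrix R}

/-- `G(m,l,n)` for `ι = Fin n` and `ζ` a primitive `m`-th root of unity. -/
def imprimitiveReflectionGroup (ζ : R) (l : ℕ) : Subgroup (GL ι R) :=
  Subgroup.closure (imprimitiveGenerators ζ l)

variable {ζ : R} {l m : ℕ}

theorem inv_mem_imprimitiveGenerators (hm : 0 < m) (hζ : ζ ^ m = 1) {M : GL ι R}
    (hM : M ∈ imprimitiveGenerators ζ l) : M⁻¹ ∈ imprimitiveGenerators ζ l := by
  rcases hM with ⟨a, hMa, ha⟩ | ⟨σ, hMσ⟩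
  · refine Or.inl ⟨fun i => (m - 1) * a i, Units.inv_eq_of_mul_eq_one_right ?_, ?_⟩
    · rw [hMa, diagonal_mul_diagonal, ← diagonal_one]
      congr 1
      funext i
      rw [← pow_add, ← one_add_mul, Nat.add_sub_cancel' (show 1 ≤ m from hm), pow_mul, hζ, one_pow]
    · rw [← Finset.mul_sum]
      exact ha.mul_left _
  · refine Or.inr ⟨σ⁻¹, Units.inv_eq_of_mul_eq_one_right ?_⟩
    rw [hMσ, ← permMatrix_mul, inv_mul_cancel, permMatrix_one]

theorem isMonomialPow_of_mem_imprimitiveReflectionGroup (hm : 0 < m) (hζ : ζ ^ m = 1)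
    {M : GL ι R} (hM : M ∈ imprimitiveReflectionGroup ζ l) :
    IsMonomialPow ζ l (M : Matrix ι ι R) := by
  have hgen (N : GL ι R) (hN : N ∈ imprimitiveGenerators ζ l) :
      IsMonomialPow ζ l (N : Matrix ι ι R) := by
    rcases hN with ⟨a, hN, ha⟩ | ⟨σ, hN⟩
    · exact ⟨1, a, by rw [hN, permMatrix_one, Matrix.one_mul], ha⟩
    · exact ⟨σ, 0, by simp [hN], by simp⟩
  induction hM using Subgroup.closure_induction'' with
  | mem N hN => exact hgen N hN
  | inv_mem N hN => exact hgen _ (inv_mem_imprimitiveGenerators hm hζ hN)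
  | one => exact .one
  | mul N N' _ _ hN hN' => exact hN.mul hN'

theorem exists_coe_eq_pow_smul_one {H : Subgroup (GL ι R)} {c : R}
    (h : ∃ M ∈ H, (M : Matrix ι ι R) = c • 1) (j : ℕ) :
    ∃ M ∈ H, (M : Matrix ι ι R) = c ^ j • 1 := by
  obtain ⟨M, hM, hMc⟩ := h
  exact ⟨M ^ j, pow_mem hM j, by rw [Units.val_pow_eq_pow_val, hMc, smul_pow, one_pow]⟩

theorem exists_mem_imprimitiveReflectionGroup_eq_pow_smul_one_iff [Nontrivial R]
    (hζ : IsPrimitiveRoot ζ m) (hm : 0 < m) (hlm : l ∣ m) (e : ℕ) :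
    (∃ M ∈ (imprimitiveReflectionGroup ζ l : Subgroup (GL ι R)), (M : Matrix ι ι R) = ζ ^ e • 1) ↔
      l ∣ Fintype.card ι * e := by
  constructor
  · rintro ⟨M, hM, hMe⟩
    obtain ⟨a, ha, hae⟩ :=
      (isMonomialPow_of_mem_imprimitiveReflectionGroup hm hζ.pow_eq_one hM)
        |>.exists_pow_eq_of_eq_smul_one hMe ((hζ.isUnit hm.ne').pow e).ne_zero
    have hmod : ∀ i, a i ≡ e [MOD m] := fun i => by
      rw [hζ.eq_orderOf]
      exact (hζ.isOfFinOrder hm.ne').pow_eq_pow_iff_modEq.mp (hae i)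
    have hsum : ∑ i, a i ≡ Fintype.card ι * e [MOD m] := by
      simpa using Nat.ModEq.sum (s := Finset.univ) fun i _ => hmod i
    exact (hsum.dvd_iff hlm).mp ha
  · intro h
    refine ⟨GeneralLinearGroup.scalar ι ((hζ.isUnit hm.ne').pow e).unit,
      Subgroup.subset_closure (Or.inl ⟨fun _ => e, ?_, by simpa using h⟩), ?_⟩ <;>
      simp [GeneralLinearGroup.coe_scalar, scalar_apply, smul_one_eq_diagonal]

end

theorem stmt13_general (k : Type*) [Field k] (m l n p : ℕ) [Fact p.Prime]
    (hm : 0 < m) (hn : 0 < n) (hlm : l ∣ m)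
    (ζ : k) (hζ : IsPrimitiveRoot ζ m)
    (ζp : k) (hζp : IsPrimitiveRoot ζp p) :
    (∃ M ∈ Subgroup.closure
        ({M : Matrix.GeneralLinearGroup (Fin n) k | ∃ a : Fin n → ℕ,
            (M : Matrix (Fin n) (Fin n) k) = Matrix.diagonal (fun i => ζ ^ a i) ∧
            l ∣ ∑ i, a i} ∪
         {M : Matrix.GeneralLinearGroup (Fin n) k | ∃ σ : Equiv.Perm (Fin n),
            (M : Matrix (Fin n) (Fin n) k) = σ.permMatrix k}),
      (M : Matrix (Fin n) (Fin n) k) = ζp • (1 : Matrix (Fin n) (Fin n) k)) ↔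
    (p ∣ m ∧ l ∣ n * (m / p)) := by
  change (∃ M ∈ imprimitiveReflectionGroup (ι := Fin n) ζ l,
    (M : Matrix (Fin n) (Fin n) k) = ζp • 1) ↔ _
  have hscalar :=
    exists_mem_imprimitiveReflectionGroup_eq_pow_smul_one_iff (ι := Fin n) hζ hm hlm (m / p)
  rw [Fintype.card_fin] at hscalar
  have hroot (hpm : p ∣ m) : IsPrimitiveRoot (ζ ^ (m / p)) p :=
    hζ.pow hm (Nat.div_mul_cancel hpm).symm
  constructor
  · rintro ⟨M, hM, hMe⟩
    have hpm : p ∣ m := by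
      obtain ⟨a, -, hae⟩ :=
        (isMonomialPow_of_mem_imprimitiveReflectionGroup hm hζ.pow_eq_one hM)
          |>.exists_pow_eq_of_eq_smul_one hMe (hζp.ne_zero (Fact.out : p.Prime).ne_zero)
      rw [← hζp.pow_eq_one_iff_dvd, ← hae ⟨0, hn⟩, ← pow_mul, mul_comm, pow_mul, hζ.pow_eq_one,
        one_pow]
    obtain ⟨c, -, hc⟩ := hζp.eq_pow_of_pow_eq_one (hroot hpm).pow_eq_one
    exact ⟨hpm, hscalar.mp (hc ▸ exists_coe_eq_pow_smul_one ⟨M, hM, hMe⟩ c)⟩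
  · rintro ⟨hpm, hdvd⟩
    obtain ⟨c, -, hc⟩ := (hroot hpm).eq_pow_of_pow_eq_one hζp.pow_eq_one
    exact hc ▸ exists_coe_eq_pow_smul_one (hscalar.mpr hdvd) c

/-- The group `G(m,l,n)`, generated inside `GL_n(k)` by the diagonal subgroup `A(m,l,n)` and
the permutation matrices, contains the scalar matrix `ζ_p·I` iff `p ∣ m` and
`n·(m/p) ≡ 0 mod l`. -/
theorem stmt13 (k : Type*) [Field k] (m l n p : ℕ) [Fact p.Prime]
    (hm : 0 < m) (hn : 0 < n) (hl : 0 < l) (hlm : l ∣ m)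
    (ζ : k) (hζ : IsPrimitiveRoot ζ m)
    (ζp : k) (hζp : IsPrimitiveRoot ζp p) :
    (∃ M ∈ Subgroup.closure
        ({M : Matrix.GeneralLinearGroup (Fin n) k | ∃ a : Fin n → ℕ,
            (M : Matrix (Fin n) (Fin n) k) = Matrix.diagonal (fun i => ζ ^ a i) ∧
            l ∣ ∑ i, a i} ∪
         {M : Matrix.GeneralLinearGroup (Fin n) k | ∃ σ : Equiv.Perm (Fin n),
            (M : Matrix (Fin n) (Fin n) k) = σ.permMatrix k}),
      (M : Matrix (Fin n) (Fin n) k) = ζp • (1 : Matrix (Fin n) (Fin n) k)) ↔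
    (p ∣ m ∧ l ∣ n * (m / p)) :=
  stmt13_general k m l n p hm hn hlm ζ hζ ζp hζp
end

section
/- Let G be a finite group acting on a variety Y over an algebraically closed field, transitively permuting the irreducible components of Y. Suppose for each prime p_i dividing |G| there is a smooth point y_i ∈ Y whose stabilizer contains a Sylow p_i-subgroup of G. Then Y is irreducible. -/
/-!
The components form a single `G`-orbit, so their number is the index of the stabilizer of any
one of them. A component through a smooth point fixed by a Sylow `p`-subgroup is itself fixed by
it, since it is the only component through that point; hence the number of components is prime
to `p`. Being prime to every prime divisor of `|G|` while dividing `|G|`, it equals `1`.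
-/

open MulAction Pointwise

theorem MulAction.subsingleton_of_forall_sylow_le_stabilizer {G S : Type*} [Group G] [Finite G]
    [MulAction G S] [IsPretransitive G S]
    (h : ∀ p : ℕ, p.Prime → p ∣ Nat.card G →
      ∃ (s : S) (P : Sylow p G), (P : Subgroup G) ≤ stabilizer G s) :
    Subsingleton S := by
  rcases isEmpty_or_nonempty S with _ | ⟨⟨s₀⟩⟩
  · infer_instance
  have hdvd : Nat.card S ∣ Nat.card G :=
    index_stabilizer_of_transitive G s₀ ▸ (stabilizer G s₀).index_dvd_card
  have hcop : (Nat.card S).Coprime (Nat.card G) := Nat.coprime_of_dvd fun p hp hpS hpG => by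
    obtain ⟨s, P, hP⟩ := h p hp hpG
    have := Fact.mk hp
    exact P.not_dvd_index
      (hpS.trans (index_stabilizer_of_transitive G s ▸ Subgroup.index_dvd_of_le hP))
  exact (Nat.card_eq_one_iff_unique.mp (hcop.eq_one_of_dvd hdvd)).1

theorem irreducibleSpace_of_subsingleton_irreducibleComponents {Y : Type*} [TopologicalSpace Y]
    [Nonempty Y] (h : (irreducibleComponents Y).Subsingleton) : IrreducibleSpace Y := by
  obtain ⟨y₀⟩ := ‹Nonempty Y›
  rw [irreducibleSpace_def]
  convert isIrreducible_irreducibleComponent (x := y₀)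
  refine (Set.eq_univ_of_forall fun y => ?_).symm
  rw [← h (irreducibleComponent_mem_irreducibleComponents y)
    (irreducibleComponent_mem_irreducibleComponents y₀)]
  exact mem_irreducibleComponent

section ComponentAction

variable {G Y : Type*} [Group G] [TopologicalSpace Y] [MulAction G Y] [ContinuousConstSMul G Y]

theorem smul_mem_irreducibleComponents (g : G) {C : Set Y} (hC : C ∈ irreducibleComponents Y) :
    g • C ∈ irreducibleComponents Y :=
  image_mem_irreducibleComponents_of_isPreirreducible_fiber (g • ·) (continuous_const_smul g)
    (isOpenMap_smul g)
    (fun _ => (Set.subsingleton_singleton.preimage (MulAction.injective g)).isPreirreducible)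
    (MulAction.surjective g) hC

variable (G Y) in
def irreducibleComponentsSubMulAction : SubMulAction G (Set Y) where
  carrier := irreducibleComponents Y
  smul_mem' := smul_mem_irreducibleComponents

theorem smul_irreducibleComponent_eq_of_smul_eq {g : G} {y : Y} {C : Set Y}
    (hC : ∃! C, C ∈ irreducibleComponents Y ∧ y ∈ C) (hyC : C ∈ irreducibleComponents Y ∧ y ∈ C)
    (hg : g • y = y) : g • C = C :=
  hC.unique ⟨smul_mem_irreducibleComponents g hyC.1, hg ▸ Set.smul_mem_smul_set hyC.2⟩ hyC

end ComponentAction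

/-- If a finite group `G` acts on `Y` transitively permuting its irreducible components, and
for every prime `p ∣ |G|` some point lying on a unique irreducible component (a smooth point)
is fixed by a Sylow `p`-subgroup, then `Y` is irreducible. -/
theorem stmt15 (G : Type*) [Group G] [Finite G]
    (Y : Type*) [TopologicalSpace Y] [Nonempty Y]
    [MulAction G Y] (hcont : ∀ g : G, Continuous (fun y : Y => g • y))
    (htrans : ∀ C D : Set Y, C ∈ irreducibleComponents Y → D ∈ irreducibleComponents Y →
      ∃ g : G, (fun y => g • y) '' C = D)
    (hsmooth : ∀ p : ℕ, p.Prime → p ∣ Nat.card G →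
      ∃ (y : Y) (P : Sylow p G), (∀ g ∈ (P : Subgroup G), g • y = y) ∧
        ∃! C, C ∈ irreducibleComponents Y ∧ y ∈ C) :
    IrreducibleSpace Y := by
  have : ContinuousConstSMul G Y := ⟨hcont⟩
  let S := irreducibleComponentsSubMulAction G Y
  have : IsPretransitive G S := ⟨fun C D => by
    obtain ⟨g, hg⟩ := htrans C D C.2 D.2
    exact ⟨g, Subtype.ext hg⟩⟩
  have : Subsingleton S := subsingleton_of_forall_sylow_le_stabilizer fun p hp hpG => by
    obtain ⟨y, P, hfix, hunique⟩ := hsmooth p hp hpG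
    obtain ⟨C, hyC⟩ := hunique.exists
    exact ⟨⟨C, hyC.1⟩, P, fun g hg =>
      Subtype.ext (smul_irreducibleComponent_eq_of_smul_eq hunique hyC (hfix g hg))⟩
  exact irreducibleSpace_of_subsingleton_irreducibleComponents ((Set.subsingleton_coe _).mp this)
end

section
/- Let p > 2 be a prime, P a non-abelian group of order p^3, ψ : P → GL(U) a faithful irreducible p-dimensional representation over an algebraically closed field k of characteristic ≠ p, and G = P × P acting on V = (U ⊗ U) ⊕ U via (ψ₁⊗ψ₂) ⊕ ψ₁, where ψ_i is ψ precomposed with the i-th projection. Then the only faithful G-subrepresentation of V is V itself, while G admits a faithful representation of dimension 2p. -/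
/-!
By Burnside's theorem the image of an irreducible representation over an algebraically closed
field spans all endomorphisms, so the external tensor product `ψ₁ ⊗ ψ₂` is irreducible. Hence a
subrepresentation `W` of `(U ⊗ U) ⊕ U` contains `U ⊗ U` unless it meets it trivially, and
projects onto `U` unless it lies in `U ⊗ U`. If `W ∩ (U ⊗ U) = 0`, then `W` is fixed pointwise
by `(1, z)` for any `z ≠ 1`: this element acts trivially on `U`, so `(1, z) x - x` lies in
`W ∩ (U ⊗ U)`. If `W ⊆ U ⊗ U`, it is fixed by `(z, z⁻¹)` for a non-trivial central `z` (one
exists since `P` is a `p`-group): `ψ z` is a scalar by Schur's lemma, so `ψ z ⊗ ψ z⁻¹ = 1`.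
-/

open TensorProduct

namespace Submodule

theorem eq_bot_or_eq_top_of_forall_le_comap {K M : Type*} [Field K] [AddCommGroup M]
    [Module K M] (W : Submodule K M) (hW : ∀ T : Module.End K M, W ≤ W.comap T) :
    W = ⊥ ∨ W = ⊤ := by
  obtain _ | _ := subsingleton_or_nontrivial M
  · exact .inl (Subsingleton.elim _ _)
  let N : Submodule (Module.End K M) M := { W with smul_mem' := fun T _ hx => hW T hx }
  have hN : N.restrictScalars K = W := rfl
  rcases eq_bot_or_eq_top N with h | h
  · exact .inl (by rw [← hN, h, restrictScalars_bot])
  · exact .inr (by rw [← hN, h, restrictScalars_top])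

variable {R X Y : Type*} [Ring R] [AddCommGroup X] [Module R X] [AddCommGroup Y] [Module R Y]
  (W : Submodule R (X × Y))

theorem eq_top_of_comap_inl_eq_top_of_map_snd_eq_top (h₁ : W.comap (LinearMap.inl R X Y) = ⊤)
    (h₂ : W.map (LinearMap.snd R X Y) = ⊤) : W = ⊤ := by
  refine eq_top_iff.2 fun ⟨t, w⟩ _ => ?_
  obtain ⟨x, hx, rfl⟩ : w ∈ W.map (LinearMap.snd R X Y) := h₂ ▸ mem_top
  have hinl : (t - x.1, 0) ∈ W := (h₁ ▸ mem_top : t - x.1 ∈ W.comap (LinearMap.inl R X Y))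
  convert W.add_mem hx hinl using 1
  ext <;> simp

theorem prodMap_id_apply_eq_self_of_comap_inl_eq_bot (L : Module.End R X)
    (hL : ∀ x ∈ W, L.prodMap LinearMap.id x ∈ W) (h : W.comap (LinearMap.inl R X Y) = ⊥) :
    ∀ x ∈ W, L.prodMap LinearMap.id x = x := by
  intro x hx
  have : L x.1 - x.1 ∈ W.comap (LinearMap.inl R X Y) := by
    have hsub := W.sub_mem (hL x hx) hx
    rwa [show L.prodMap LinearMap.id x - x = LinearMap.inl R X Y (L x.1 - x.1) by
      ext <;> simp] at hsub
  rw [h, mem_bot, sub_eq_zero] at this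
  simp [this]

theorem id_prodMap_apply_eq_self_of_map_snd_eq_bot (L : Module.End R Y)
    (h : W.map (LinearMap.snd R X Y) = ⊥) :
    ∀ x ∈ W, LinearMap.id.prodMap L x = x := by
  intro x hx
  have : x.2 = 0 := (eq_bot_iff.1 h) ⟨x, hx, rfl⟩
  ext <;> simp [this]

end Submodule

namespace Representation

section

variable {k G U : Type*} [Field k] [IsAlgClosed k] [Monoid G] [AddCommGroup U] [Module k U]
  [FiniteDimensional k U] (ψ : Representation k G U)
  (hψ : ∀ W : Submodule k U, (∀ g, ∀ w ∈ W, ψ g w ∈ W) → W = ⊥ ∨ W = ⊤)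
include hψ

/-- Burnside's theorem, via the Jacobson density theorem for `U` as a module over the algebra
generated by `ψ`, whose commutant consists of scalars by Schur's lemma. -/
theorem adjoin_range_eq_top : Algebra.adjoin k (Set.range ψ) = ⊤ := by
  obtain _ | _ := subsingleton_or_nontrivial U
  · exact Subsingleton.elim _ _
  set A := Algebra.adjoin k (Set.range ψ)
  have : IsSimpleModule A U := by
    refine (isSimpleModule_iff _ _).2 ⟨fun N => ?_⟩
    simpa using hψ (N.restrictScalars k)
      fun g w hw => N.smul_mem ⟨ψ g, Algebra.subset_adjoin ⟨g, rfl⟩⟩ hw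
  have hscalar := IsSimpleModule.algebraMap_end_bijective_of_isAlgClosed (A := A) (V := U) k
  have : Module.Finite (Module.End A U) U := .of_restrictScalars_finite k _ _
  refine eq_top_iff.2 fun T _ => ?_
  let f : Module.End (Module.End A U) U :=
    { toFun := T, map_add' := T.map_add
      map_smul' := fun φ u => by
        obtain ⟨c, rfl⟩ := hscalar.2 φ
        simp }
  obtain ⟨a, ha⟩ := Module.Finite.toModuleEnd_moduleEnd_surjective (R := A) (M := U) f
  have : (a : Module.End k U) = T := LinearMap.ext fun u => congr($ha u)
  exact this ▸ a.2

theorem span_range_eq_top : Submodule.span k (Set.range ψ) = ⊤ := by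
  rw [← MonoidHom.coe_mrange, ← Submonoid.closure_eq (MonoidHom.mrange ψ),
    ← Algebra.adjoin_eq_span, MonoidHom.coe_mrange, adjoin_range_eq_top ψ hψ,
    Algebra.top_toSubmodule]

theorem exists_eq_smul_one_of_commute (T : Module.End k U) (hT : ∀ g, Commute (ψ g) T) :
    ∃ c : k, T = c • 1 := by
  have hcomm : ⊤ ≤ Subalgebra.centralizer k {T} := by
    rw [← adjoin_range_eq_top ψ hψ, Algebra.adjoin_le_iff]
    rintro _ ⟨g, rfl⟩
    exact (Subalgebra.mem_centralizer_iff k).2 (by simpa using (hT g).eq.symm)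
  have : T ∈ Subalgebra.center k (Module.End k U) :=
    Subalgebra.mem_center_iff.2 fun B =>
      ((Subalgebra.mem_centralizer_iff k).1 (hcomm Algebra.mem_top) T rfl).symm
  obtain ⟨c, hc⟩ := (Algebra.IsCentral.mem_center_iff k).1 this
  exact ⟨c, by rw [hc, Algebra.algebraMap_eq_smul_one]⟩

theorem externalTensor_eq_bot_or_eq_top {G' U' : Type*} [Monoid G'] [AddCommGroup U']
    [Module k U'] [FiniteDimensional k U'] (ψ' : Representation k G' U')
    (hψ' : ∀ W : Submodule k U', (∀ g, ∀ w ∈ W, ψ' g w ∈ W) → W = ⊥ ∨ W = ⊤)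
    (W : Submodule k (U ⊗[k] U')) (hW : ∀ g g', ∀ x ∈ W, map (ψ g) (ψ' g') x ∈ W) :
    W = ⊥ ∨ W = ⊤ := by
  have hpure : ∀ A B, map A B ∈ W.compatibleMaps W := by
    intro A B
    have : Submodule.map₂ (mapBilinear (.id k) U U' U U') (Submodule.span k (Set.range ψ))
        (Submodule.span k (Set.range ψ')) ≤ W.compatibleMaps W := by
      rw [Submodule.map₂_span_span, Submodule.span_le]
      rintro _ ⟨_, ⟨g, rfl⟩, _, ⟨g', rfl⟩, rfl⟩
      exact hW g g'
    exact this (Submodule.apply_mem_map₂ _ (span_range_eq_top ψ hψ ▸ Submodule.mem_top)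
      (span_range_eq_top ψ' hψ' ▸ Submodule.mem_top))
  refine W.eq_bot_or_eq_top_of_forall_le_comap fun T => show T ∈ W.compatibleMaps W from ?_
  obtain ⟨x, rfl⟩ := (homTensorHomEquiv k U U' U U').surjective T
  induction x using TensorProduct.induction_on with
  | zero => simp
  | tmul A B => simpa using hpure A B
  | add x y hx hy => rw [map_add]; exact (W.compatibleMaps W).add_mem hx hy

end

theorem map_apply_apply_inv_eq_one_of_mem_center {k G U : Type*} [Field k] [IsAlgClosed k]
    [Group G] [AddCommGroup U] [Module k U] [FiniteDimensional k U] (ψ : Representation k G U)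
    (hψ : ∀ W : Submodule k U, (∀ g, ∀ w ∈ W, ψ g w ∈ W) → W = ⊥ ∨ W = ⊤)
    {z : G} (hz : z ∈ Subgroup.center G) : map (ψ z) (ψ z⁻¹) = 1 := by
  obtain ⟨c, hc⟩ := ψ.exists_eq_smul_one_of_commute hψ (ψ z) fun g => by
    rw [Commute, SemiconjBy, ← map_mul, ← map_mul, Subgroup.mem_center_iff.1 hz g]
  rw [hc, map_smul_left, ← map_smul_right, ← smul_one_mul c (ψ z⁻¹), ← hc, ← map_mul,
    mul_inv_cancel, map_one, TensorProduct.map_one]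

end Representation

theorem LinearMap.prodMap_eq_prodMap_iff {R M₁ M₂ N₁ N₂ : Type*} [Semiring R]
    [AddCommMonoid M₁] [AddCommMonoid M₂] [AddCommMonoid N₁] [AddCommMonoid N₂]
    [Module R M₁] [Module R M₂] [Module R N₁] [Module R N₂]
    {f f' : M₁ →ₗ[R] N₁} {g g' : M₂ →ₗ[R] N₂} :
    f.prodMap g = f'.prodMap g' ↔ f = f' ∧ g = g' := by
  refine ⟨fun h => ⟨ext fun u => ?_, ext fun u => ?_⟩, fun ⟨hf, hg⟩ => hf ▸ hg ▸ rfl⟩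
  · simpa using congr(($h (u, 0)).1)
  · simpa using congr(($h (0, u)).2)

theorem stmt17_general (k : Type*) [Field k] [IsAlgClosed k] (p : ℕ) [Fact p.Prime]
    (P : Type*) [Group P] [Finite P] (hcard : Nat.card P = p ^ 3)
    (U : Type*) [AddCommGroup U] [Module k U] [FiniteDimensional k U]
    (hU : Module.finrank k U = p)
    (ψ : Representation k P U) (hψf : Function.Injective ψ)
    (hψirr : ∀ W : Submodule k U, (∀ g : P, ∀ w ∈ W, ψ g w ∈ W) → W = ⊥ ∨ W = ⊤)
    (ρ : Representation k (P × P) (TensorProduct k U U × U))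
    (hρ : ∀ (g : P × P) (u v w : U),
      ρ g (u ⊗ₜ[k] v, w) = (ψ g.1 u ⊗ₜ[k] ψ g.2 v, ψ g.1 w)) :
    (∀ W : Submodule k (TensorProduct k U U × U),
      (∀ g : P × P, ∀ x ∈ W, ρ g x ∈ W) →
      (∀ g : P × P, (∀ x ∈ W, ρ g x = x) → g = 1) → W = ⊤) ∧
    Function.Injective (fun g : P × P => LinearMap.prodMap (ψ g.1) (ψ g.2)) ∧
    Module.finrank k (U × U) = 2 * p := by
  have hρ' (g : P × P) : ρ g = (map (ψ g.1) (ψ g.2)).prodMap (ψ g.1) :=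
    LinearMap.prod_ext (TensorProduct.ext' fun u v => by simpa using hρ g u v 0)
      (LinearMap.ext fun w => by simpa using hρ g 0 0 w)
  have hP := IsPGroup.of_card hcard
  have : Nontrivial P := hP.nontrivial_iff_card.2 ⟨3, by norm_num, hcard⟩
  obtain ⟨z, hz, hz1⟩ := (Subgroup.nontrivial_iff_exists_ne_one _).1 hP.center_nontrivial
  have hzz := ψ.map_apply_apply_inv_eq_one_of_mem_center hψirr hz
  refine ⟨fun W hW hfaith => ?_, fun g h hgh => ?_, by rw [Module.finrank_prod, hU, two_mul]⟩
  · have hinl : W.comap (LinearMap.inl k _ U) = ⊤ := by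
      refine (ψ.externalTensor_eq_bot_or_eq_top hψirr ψ hψirr _ fun g h t ht => ?_).resolve_left
        fun hbot => hz1 (congrArg Prod.snd (hfaith (1, z) ?_))
      · simpa [hρ'] using hW (g, h) (t, 0) ht
      · simpa [hρ'] using W.prodMap_id_apply_eq_self_of_comap_inl_eq_bot (map 1 (ψ z))
          (fun x hx => by simpa [hρ'] using hW (1, z) x hx) hbot
    have hsnd : W.map (LinearMap.snd k _ U) = ⊤ := by
      refine (hψirr _ fun g w hw => ?_).resolve_left
        fun hbot => hz1 (congrArg Prod.fst (hfaith (z, z⁻¹) ?_))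
      · obtain ⟨x, hx, rfl⟩ := hw
        exact ⟨ρ (g, 1) x, hW _ x hx, by simp [hρ']⟩
      · simpa [hρ', hzz] using W.id_prodMap_apply_eq_self_of_map_snd_eq_bot (ψ z) hbot
    exact W.eq_top_of_comap_inl_eq_top_of_map_snd_eq_top hinl hsnd
  · obtain ⟨h₁, h₂⟩ := LinearMap.prodMap_eq_prodMap_iff.1 hgh
    exact Prod.ext (hψf h₁) (hψf h₂)

/-- Example 5.2: for `G = P × P` acting on `(U ⊗ U) ⊕ U` via `(ψ₁ ⊗ ψ₂) ⊕ ψ₁`, the only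
faithful subrepresentation is the whole space, while `G` has a faithful representation
(namely `ψ₁ ⊕ ψ₂`) of dimension `2p`. -/
theorem stmt17 (k : Type*) [Field k] [IsAlgClosed k] (p : ℕ) [Fact p.Prime] (hp : 2 < p)
    (hchark : (p : k) ≠ 0)
    (P : Type*) [Group P] [Finite P] (hcard : Nat.card P = p ^ 3)
    (hnab : ∃ a b : P, a * b ≠ b * a)
    (U : Type*) [AddCommGroup U] [Module k U] [FiniteDimensional k U]
    (hU : Module.finrank k U = p)
    (ψ : Representation k P U) (hψf : Function.Injective ψ)
    (hψirr : ∀ W : Submodule k U, (∀ g : P, ∀ w ∈ W, ψ g w ∈ W) → W = ⊥ ∨ W = ⊤)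
    (ρ : Representation k (P × P) (TensorProduct k U U × U))
    (hρ : ∀ (g : P × P) (u v w : U),
      ρ g (u ⊗ₜ[k] v, w) = (ψ g.1 u ⊗ₜ[k] ψ g.2 v, ψ g.1 w)) :
    (∀ W : Submodule k (TensorProduct k U U × U),
      (∀ g : P × P, ∀ x ∈ W, ρ g x ∈ W) →
      (∀ g : P × P, (∀ x ∈ W, ρ g x = x) → g = 1) → W = ⊤) ∧
    Function.Injective (fun g : P × P => LinearMap.prodMap (ψ g.1) (ψ g.2)) ∧
    Module.finrank k (U × U) = 2 * p :=
  stmt17_general k p P hcard U hU ψ hψf hψirr ρ hρ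
end
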